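/- Let Z_• be a green nonlinear stability function. For every t₀ ∈ ℝ, the pair (S_Z(−∞,t₀], S_Z(t₀,∞)) is a torsion pair in mod-Λ: Hom(A,B)=0 for A in the first class and B in the second, A belongs to the first class iff A has no nonzero quotient in the second, and B belongs to the second class iff it has no nonzero submodule in the first. -/

import Mathlib

/-!
Write `tzero(Y)` for the first time at which `μ_t(Y) = t`. Greenness makes `t ↦ μ_t(Y) - t`
cross zero downwards whenever `Y` is semistable at the crossing; by induction over submodules,
if `μ_t(Y') ≥ t` for all submodules `Y'` of `Y`, then `tzero(Y') ≥ t` for every nonzero `Y'`.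
Hence every nonzero submodule of a module in `S_Z(t₀,∞)` has `tzero > t₀`, while a nonzero
quotient `Q` of a `Z_s`-semistable module with `μ_s = s` has `μ_s(Q) ≤ s`; walking up the HN
filtration of a module in `S_Z(-∞,t₀]`, this kills every morphism into `S_Z(t₀,∞)`.

For the decomposition, let `τ` be the first crossing time among the nonzero submodules of `M`
and `P` the largest submodule with `μ_τ(P) = τ`: it is semistable and every nonzero submodule
of `M ⧸ P` crosses strictly after `τ`, so induction on the dimension vector splits `M` into a
part in `S_Z(-∞,t₀]` and a quotient in `S_Z(t₀,∞)`.
-/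

open scoped BigOperators

noncomputable section

/-- Dot product of a real vector with a dimension vector. -/
def dprod {n : ℕ} (x : Fin n → ℝ) (v : Fin n → ℕ) : ℝ := ∑ i, x i * (v i : ℝ)

/-- Slope of a dimension vector with respect to a linear stability function
`Z(x) = a·x + i b·x`. -/
def zslope {n : ℕ} (a b : Fin n → ℝ) (v : Fin n → ℕ) : ℝ := dprod a v / dprod b v

/-- The semistability set `D(M)` of a module `M`, with respect to a dimension-vector
assignment `d`. -/
def DSet {Λ : Type} [Ring Λ] {n : ℕ}
    (d : (N : Type) → [AddCommGroup N] → [Module Λ N] → Fin n → ℕ)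
    (M : Type) [AddCommGroup M] [Module Λ M] : Set (Fin n → ℝ) :=
  {x | dprod x (d M) = 0 ∧ ∀ M' : Submodule Λ M, dprod x (d ↥M') ≤ 0}

/-- A module is Schurian if it is nonzero and every nonzero endomorphism is invertible,
i.e. its endomorphism ring is a division algebra. -/
def Schurian (Λ : Type) [Ring Λ] (M : Type) [AddCommGroup M] [Module Λ M] : Prop :=
  (∃ y : M, y ≠ 0) ∧ ∀ f : M →ₗ[Λ] M, f ≠ 0 → Function.Bijective f

/-- `X` belongs to `E(M)`: `X` admits a finite filtration with all subquotients
isomorphic to `M`. -/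
def IsFiltered (Λ : Type) [Ring Λ] (M : Type) [AddCommGroup M] [Module Λ M]
    (X : Type) [AddCommGroup X] [Module Λ X] : Prop :=
  ∃ (k : ℕ) (F : Fin (k + 1) → Submodule Λ X), Monotone F ∧ F 0 = ⊥ ∧ F (Fin.last k) = ⊤ ∧
    ∀ i : Fin k, Nonempty
      ((↥(F i.succ) ⧸ Submodule.comap (F i.succ).subtype (F i.castSucc)) ≃ₗ[Λ] M)

/-- Slope at time `t` of a dimension vector, for a nonlinear stability function
`Z_t(x) = a_t·x + i b_t·x`. -/
def muZ {n : ℕ} (a b : ℝ → Fin n → ℝ) (t : ℝ) (v : Fin n → ℕ) : ℝ :=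
  dprod (a t) v / dprod (b t) v

/-- `M` is `Z_t`-semistable: every nonzero submodule has zslope at least that of `M`. -/
def Semistable {Λ : Type} [Ring Λ] {n : ℕ}
    (d : (N : Type) → [AddCommGroup N] → [Module Λ N] → Fin n → ℕ)
    (a b : ℝ → Fin n → ℝ) (t : ℝ)
    (M : Type) [AddCommGroup M] [Module Λ M] : Prop :=
  ∀ M' : Submodule Λ M, M' ≠ ⊥ → muZ a b t (d M) ≤ muZ a b t (d ↥M')

/-- The nonlinear stability function given by `(a, b)` is green (for `Λ`): at every
semistable pair `(N, t₀)` (with `N` a nonzero finite-length `Λ`-module, `N`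
`Z_{t₀}`-semistable and `μ_{t₀}(N) = t₀`), the derivative of `t ↦ μ_t(N)` at `t₀`
is `< 1`. -/
def ZGreen {Λ : Type} [Ring Λ] {n : ℕ}
    (d : (N : Type) → [AddCommGroup N] → [Module Λ N] → Fin n → ℕ)
    (a b : ℝ → Fin n → ℝ) : Prop :=
  ∀ (N : Type) [AddCommGroup N] [Module Λ N] [IsNoetherian Λ N] [IsArtinian Λ N] (t₀ : ℝ),
    (∃ y : N, y ≠ 0) → Semistable d a b t₀ N → muZ a b t₀ (d N) = t₀ →
      deriv (fun t => muZ a b t (d N)) t₀ < 1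

/-- `t₀(M)`: the smallest `t` with `μ_t(M) = t` (as an infimum). -/
def tzero {n : ℕ} (a b : ℝ → Fin n → ℝ) (v : Fin n → ℕ) : ℝ := sInf {t | muZ a b t v = t}

/-- `t₁(M)`: the smallest value of `t₀(M')` over nonzero submodules `M' ⊆ M`. -/
def tone {Λ : Type} [Ring Λ] {n : ℕ}
    (d : (N : Type) → [AddCommGroup N] → [Module Λ N] → Fin n → ℕ)
    (a b : ℝ → Fin n → ℝ)
    (M : Type) [AddCommGroup M] [Module Λ M] : ℝ :=
  sInf {s : ℝ | ∃ M' : Submodule Λ M, M' ≠ ⊥ ∧ s = tzero a b (d ↥M')}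

/-- `X` belongs to `S_Z(I)`: `X` has a Harder–Narasimhan filtration whose strictly
increasing sequence of times all lie in `I`, with `k`-th subquotient `Z_{t_k}`-semistable
of slope `μ_{t_k} = t_k`. -/
def HNin {Λ : Type} [Ring Λ] {n : ℕ}
    (d : (N : Type) → [AddCommGroup N] → [Module Λ N] → Fin n → ℕ)
    (a b : ℝ → Fin n → ℝ) (I : Set ℝ)
    (X : Type) [AddCommGroup X] [Module Λ X] : Prop :=
  ∃ (m : ℕ) (F : Fin (m + 1) → Submodule Λ X) (ts : Fin m → ℝ),
    StrictMono F ∧ F 0 = ⊥ ∧ F (Fin.last m) = ⊤ ∧ StrictMono ts ∧ (∀ i, ts i ∈ I) ∧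
    ∀ i : Fin m,
      Semistable d a b (ts i)
        (↥(F i.succ) ⧸ Submodule.comap (F i.succ).subtype (F i.castSucc)) ∧
      muZ a b (ts i)
        (d (↥(F i.succ) ⧸ Submodule.comap (F i.succ).subtype (F i.castSucc))) = ts i

open Set Topology

section Slope

variable {n : ℕ}

lemma dprod_add (x : Fin n → ℝ) (v w : Fin n → ℕ) :
    dprod x (v + w) = dprod x v + dprod x w := by
  simp only [dprod, Pi.add_apply, Nat.cast_add, mul_add, Finset.sum_add_distrib]

lemma dprod_pos {x : Fin n → ℝ} (hx : ∀ i, 0 < x i) {v : Fin n → ℕ} (hv : v ≠ 0) :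
    0 < dprod x v := by
  obtain ⟨i, hi⟩ := Function.ne_iff.mp hv
  exact Finset.sum_pos' (fun j _ => mul_nonneg (hx j).le (Nat.cast_nonneg _))
    ⟨i, Finset.mem_univ i, mul_pos (hx i) (Nat.cast_pos.mpr (Nat.pos_of_ne_zero hi))⟩

/-- `μ_t(v) - t` with the positive denominator `b_t · v` cleared; unlike the slope it is
additive in `v`. -/
def slopeExcess (a b : ℝ → Fin n → ℝ) (t : ℝ) (v : Fin n → ℕ) : ℝ :=
  dprod (a t) v - t * dprod (b t) v

variable {a b : ℝ → Fin n → ℝ} {t : ℝ} {v : Fin n → ℕ}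

lemma slopeExcess_zero : slopeExcess a b t 0 = 0 := by
  simp [slopeExcess, dprod]

lemma slopeExcess_add (v w : Fin n → ℕ) :
    slopeExcess a b t (v + w) = slopeExcess a b t v + slopeExcess a b t w := by
  simp only [slopeExcess, dprod_add]
  ring

lemma muZ_sub_self (hb : ∀ t i, 0 < b t i) (hv : v ≠ 0) :
    muZ a b t v - t = slopeExcess a b t v / dprod (b t) v := by
  have := (dprod_pos (hb t) hv).ne'
  unfold muZ slopeExcess
  field_simp

lemma lt_muZ_iff (hb : ∀ t i, 0 < b t i) (hv : v ≠ 0) :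
    t < muZ a b t v ↔ 0 < slopeExcess a b t v := by
  rw [← sub_pos, muZ_sub_self hb hv, div_pos_iff_of_pos_right (dprod_pos (hb t) hv)]

lemma le_muZ_iff (hb : ∀ t i, 0 < b t i) (hv : v ≠ 0) :
    t ≤ muZ a b t v ↔ 0 ≤ slopeExcess a b t v := by
  rw [← sub_nonneg, muZ_sub_self hb hv, le_div_iff₀ (dprod_pos (hb t) hv), zero_mul]

lemma muZ_eq_iff (hb : ∀ t i, 0 < b t i) (hv : v ≠ 0) :
    muZ a b t v = t ↔ slopeExcess a b t v = 0 := by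
  rw [← sub_eq_zero, muZ_sub_self hb hv, div_eq_zero_iff, or_iff_left (dprod_pos (hb t) hv).ne']

lemma slopeExcess_eq_zero_of_muZ_eq (hb : ∀ t i, 0 < b t i) (h : muZ a b t v = t) :
    slopeExcess a b t v = 0 := by
  rcases eq_or_ne v 0 with rfl | hv
  · exact slopeExcess_zero
  · exact (muZ_eq_iff hb hv).mp h

end Slope

lemma exists_abs_le_of_const_outside {f : ℝ → ℝ} (hf : Continuous f) {T : ℝ} (hT : 0 ≤ T)
    (hhi : ∀ t, T ≤ t → f t = f T) (hlo : ∀ t, t ≤ -T → f t = f (-T)) :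
    ∃ C, ∀ t, |f t| ≤ C := by
  obtain ⟨C, hC⟩ :=
    (isCompact_Icc (a := -T) (b := T)).exists_bound_of_continuousOn hf.continuousOn
  refine ⟨C, fun t => ?_⟩
  rcases le_or_gt T t with h | h
  · exact hhi t h ▸ hC T ⟨by linarith, le_rfl⟩
  rcases le_or_gt t (-T) with h' | h'
  · exact hlo t h' ▸ hC (-T) ⟨le_rfl, by linarith⟩
  · exact hC t ⟨h'.le, h.le⟩

lemma isLeast_fixedPoints_of_abs_le {f : ℝ → ℝ} (hf : Continuous f) {C : ℝ}
    (hC : ∀ t, |f t| ≤ C) :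
    IsLeast {t | f t = t} (sInf {t | f t = t}) ∧ ∀ t < sInf {t | f t = t}, t < f t := by
  have hfix : ∀ s, f s ≤ s → ∃ u ∈ Icc (-C) s, f u = u := by
    intro s hs
    have h₁ := (abs_le.mp (hC s)).1
    have h₂ := (abs_le.mp (hC (-C))).1
    obtain ⟨u, hu, hu0⟩ := intermediate_value_Icc' (by linarith)
      (hf.sub continuous_id).continuousOn (show (0 : ℝ) ∈ Icc (f s - s) (f (-C) - -C) from
        ⟨by linarith, by linarith⟩)
    exact ⟨u, hu, sub_eq_zero.mp hu0⟩
  have hbdd : BddBelow {t | f t = t} :=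
    ⟨-C, fun t (ht : f t = t) => ht ▸ (abs_le.mp (hC t)).1⟩
  obtain ⟨u, -, hu⟩ := hfix C (abs_le.mp (hC C)).2
  refine ⟨⟨(isClosed_eq hf continuous_id).csInf_mem ⟨u, hu⟩ hbdd,
    fun t ht => csInf_le hbdd ht⟩, fun t ht => ?_⟩
  by_contra! hle
  obtain ⟨w, hw, hfw⟩ := hfix t hle
  linarith [csInf_le hbdd hfw, hw.2]

lemma neg_of_downward_crossings {h : ℝ → ℝ} (hc : Continuous h) {τ t : ℝ} (hτt : τ < t)
    (hτ : h τ = 0)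
    (hcross : ∀ σ ∈ Icc τ t, h σ = 0 →
      ∀ᶠ u in 𝓝 σ, SignType.sign (h u) = SignType.sign (σ - u)) :
    h t < 0 := by
  have hnonpos : Icc τ t ⊆ {u | h u ≤ 0} := by
    refine ((isClosed_le hc continuous_const).inter isClosed_Icc
      ).Icc_subset_of_forall_mem_nhdsWithin hτ.le fun x ⟨(hx : h x ≤ 0), hxI⟩ => ?_
    rcases hx.lt_or_eq with hneg | hzero
    · exact mem_nhdsWithin_of_mem_nhds <| Filter.mem_of_superset
        ((isOpen_lt hc continuous_const).mem_nhds hneg) fun u (hu : h u < 0) => hu.le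
    · filter_upwards [nhdsWithin_le_nhds (hcross x (Ico_subset_Icc_self hxI) hzero),
        self_mem_nhdsWithin] with u hu (hxu : x < u)
      rw [sign_neg (sub_neg.mpr hxu), sign_eq_neg_one_iff] at hu
      exact hu.le
  refine (hnonpos ⟨hτt.le, le_rfl⟩ : h t ≤ 0).lt_of_ne fun h0 => ?_
  obtain ⟨u, hu, hτu, hut⟩ :
      ∃ u, SignType.sign (h u) = SignType.sign (t - u) ∧ τ < u ∧ u < t :=
    (((hcross t ⟨hτt.le, le_rfl⟩ h0).filter_mono nhdsWithin_le_nhds).and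
      (Ioo_mem_nhdsLT hτt)).exists.imp fun u ⟨h₁, h₂⟩ => ⟨h₁, h₂⟩
  rw [sign_pos (sub_pos.mpr hut), sign_eq_one_iff] at hu
  exact (hnonpos ⟨hτu.le, hut.le⟩ : h u ≤ 0).not_gt hu

section StabilityFunction

variable {n : ℕ}

structure IsStabilityFunction (a b : ℝ → Fin n → ℝ) : Prop where
  b_pos : ∀ t i, 0 < b t i
  contDiff_a : ∀ i, ContDiff ℝ 1 (fun t => a t i)
  contDiff_b : ∀ i, ContDiff ℝ 1 (fun t => b t i)
  const_outside : ∃ T : ℝ, 0 < T ∧ (∀ t, T ≤ t → a t = a T ∧ b t = b T) ∧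
    (∀ t, t ≤ -T → a t = a (-T) ∧ b t = b (-T))

namespace IsStabilityFunction

variable {a b : ℝ → Fin n → ℝ} {v : Fin n → ℕ}

lemma differentiable_muZ (hZ : IsStabilityFunction a b) (hv : v ≠ 0) :
    Differentiable ℝ fun t => muZ a b t v := by
  have hdprod : ∀ x : ℝ → Fin n → ℝ, (∀ i, ContDiff ℝ 1 fun t => x t i) →
      Differentiable ℝ fun t => dprod (x t) v := fun x hx =>
    Differentiable.fun_sum fun i _ => ((hx i).differentiable one_ne_zero).mul_const _
  exact (hdprod a hZ.contDiff_a).div (hdprod b hZ.contDiff_b)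
    fun t => (dprod_pos (hZ.b_pos t) hv).ne'

lemma tzero_spec (hZ : IsStabilityFunction a b) (hv : v ≠ 0) :
    IsLeast {t | muZ a b t v = t} (tzero a b v) ∧ ∀ t < tzero a b v, t < muZ a b t v := by
  have hc := (hZ.differentiable_muZ hv).continuous
  obtain ⟨T, hT, hhi, hlo⟩ := hZ.const_outside
  obtain ⟨C, hC⟩ := exists_abs_le_of_const_outside hc hT.le
    (fun t ht => by simp only [muZ, (hhi t ht).1, (hhi t ht).2])
    (fun t ht => by simp only [muZ, (hlo t ht).1, (hlo t ht).2])
  exact isLeast_fixedPoints_of_abs_le hc hC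

lemma muZ_tzero (hZ : IsStabilityFunction a b) (hv : v ≠ 0) :
    muZ a b (tzero a b v) v = tzero a b v :=
  (hZ.tzero_spec hv).1.1

lemma lt_tzero_iff (hZ : IsStabilityFunction a b) (hv : v ≠ 0) {c : ℝ} :
    c < tzero a b v ↔ ∀ t ≤ c, 0 < slopeExcess a b t v := by
  refine ⟨fun hc t ht => (lt_muZ_iff hZ.b_pos hv).mp ((hZ.tzero_spec hv).2 t (ht.trans_lt hc)),
    fun h => ?_⟩
  by_contra! hle
  exact (h _ hle).ne' (slopeExcess_eq_zero_of_muZ_eq hZ.b_pos (hZ.muZ_tzero hv))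

lemma slopeExcess_nonneg_of_le_tzero (hZ : IsStabilityFunction a b) (hv : v ≠ 0) {t : ℝ}
    (ht : t ≤ tzero a b v) : 0 ≤ slopeExcess a b t v := by
  rcases ht.lt_or_eq with ht | rfl
  · exact ((hZ.lt_tzero_iff hv).mp ht t le_rfl).le
  · exact (slopeExcess_eq_zero_of_muZ_eq hZ.b_pos (hZ.muZ_tzero hv)).ge

end IsStabilityFunction

end StabilityFunction

structure IsDimensionVector (Λ : Type) [Ring Λ] {n : ℕ}
    (d : (N : Type) → [AddCommGroup N] → [Module Λ N] → Fin n → ℕ) : Prop where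
  eq_of_equiv : ∀ (N N' : Type) [AddCommGroup N] [Module Λ N] [AddCommGroup N'] [Module Λ N']
    [IsNoetherian Λ N] [IsArtinian Λ N], (N ≃ₗ[Λ] N') → d N = d N'
  add_quotient : ∀ (N : Type) [AddCommGroup N] [Module Λ N] [IsNoetherian Λ N] [IsArtinian Λ N]
    (A : Submodule Λ N), d ↥A + d (N ⧸ A) = d N
  eq_zero_iff : ∀ (N : Type) [AddCommGroup N] [Module Λ N] [IsNoetherian Λ N] [IsArtinian Λ N],
    (d N = 0 ↔ ∀ y : N, y = 0)

section Modules

variable {Λ : Type} [Ring Λ] {n : ℕ}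
  {d : (N : Type) → [AddCommGroup N] → [Module Λ N] → Fin n → ℕ} {a b : ℝ → Fin n → ℝ}
  {M : Type} [AddCommGroup M] [Module Λ M] [IsNoetherian Λ M] [IsArtinian Λ M]
  {Y : Type} [AddCommGroup Y] [Module Λ Y]

namespace IsDimensionVector

lemma d_eq_zero_iff (hd : IsDimensionVector Λ d) (Q : Submodule Λ M) :
    d ↥Q = 0 ↔ Q = ⊥ := by
  rw [hd.eq_zero_iff, Submodule.eq_bot_iff]
  exact ⟨fun h x hx => congrArg Subtype.val (h ⟨x, hx⟩), fun h x => Subtype.ext (h x x.2)⟩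

lemma d_ne_zero (hd : IsDimensionVector Λ d) {Q : Submodule Λ M} (hQ : Q ≠ ⊥) :
    d ↥Q ≠ 0 :=
  (hd.d_eq_zero_iff Q).not.mpr hQ

lemma d_bot (hd : IsDimensionVector Λ d) : d ↥(⊥ : Submodule Λ M) = 0 :=
  (hd.d_eq_zero_iff ⊥).mpr rfl

lemma d_map_of_injective (hd : IsDimensionVector Λ d) {f : M →ₗ[Λ] Y}
    (hf : Function.Injective f) (Q : Submodule Λ M) : d ↥(Q.map f) = d ↥Q :=
  (hd.eq_of_equiv _ _ (Q.equivMapOfInjective f hf)).symm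

lemma d_comap_subtype (hd : IsDimensionVector Λ d) {V Q : Submodule Λ M} (hQ : Q ≤ V) :
    d ↥(Q.comap V.subtype) = d ↥Q := by
  rw [← hd.d_map_of_injective V.injective_subtype, Submodule.map_comap_subtype,
    inf_eq_right.mpr hQ]

lemma d_ker_add_d_range (hd : IsDimensionVector Λ d) (f : M →ₗ[Λ] Y) :
    d ↥(LinearMap.ker f) + d ↥(LinearMap.range f) = d M := by
  rw [← hd.eq_of_equiv _ _ f.quotKerEquivRange, hd.add_quotient]

lemma d_inf_add_d_map_mkQ (hd : IsDimensionVector Λ d) (K Q : Submodule Λ M) :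
    d ↥(Q ⊓ K) + d ↥(Q.map K.mkQ) = d ↥Q := by
  have := hd.d_ker_add_d_range (K.mkQ ∘ₗ Q.subtype)
  rwa [LinearMap.ker_comp, Submodule.ker_mkQ, LinearMap.range_comp, Submodule.range_subtype,
    ← hd.d_map_of_injective Q.injective_subtype, Submodule.map_comap_subtype] at this

lemma sum_d_quotient_lt (hd : IsDimensionVector Λ d) {P : Submodule Λ M} (hP : P ≠ ⊥) :
    ∑ i, d (M ⧸ P) i < ∑ i, d M i := by
  obtain ⟨i, hi⟩ := Function.ne_iff.mp (hd.d_ne_zero hP)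
  rw [← hd.add_quotient M P]
  simp only [Pi.add_apply, Finset.sum_add_distrib, lt_add_iff_pos_left]
  exact Finset.sum_pos' (fun _ _ => Nat.zero_le _) ⟨i, Finset.mem_univ i, Nat.pos_of_ne_zero hi⟩

lemma finite_range_d_submodule (hd : IsDimensionVector Λ d) :
    (Set.range fun Q : Submodule Λ M => d ↥Q).Finite :=
  (Set.finite_Iic (d M)).subset <| Set.range_subset_iff.mpr fun Q i =>
    Nat.le.intro (congrFun (hd.add_quotient M Q) i)

end IsDimensionVector

lemma semistable_iff (hd : IsDimensionVector Λ d) (hb : ∀ t i, 0 < b t i) {t : ℝ}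
    (hM : muZ a b t (d M) = t) :
    Semistable d a b t M ↔ ∀ Q : Submodule Λ M, 0 ≤ slopeExcess a b t (d ↥Q) := by
  refine ⟨fun h Q => ?_, fun h Q hQ => ?_⟩
  · rcases eq_or_ne Q ⊥ with rfl | hQ
    · rw [hd.d_bot, slopeExcess_zero]
    · exact (le_muZ_iff hb (hd.d_ne_zero hQ)).mp (hM ▸ h Q hQ :)
  · exact hM.symm ▸ (le_muZ_iff hb (hd.d_ne_zero hQ)).mpr (h Q)

lemma semistable_muZ_of_equiv (hd : IsDimensionVector Λ d) (e : M ≃ₗ[Λ] Y) {t : ℝ}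
    (h : Semistable d a b t M ∧ muZ a b t (d M) = t) :
    Semistable d a b t Y ∧ muZ a b t (d Y) = t := by
  have hMY : d M = d Y := hd.eq_of_equiv M Y e
  have : IsNoetherian Λ Y := isNoetherian_of_linearEquiv e
  have : IsArtinian Λ Y := isArtinian_of_linearEquiv e
  refine ⟨fun Q hQ => ?_, hMY ▸ h.2⟩
  rw [← hMY, ← hd.d_map_of_injective e.symm.injective]
  exact h.1 _ (by simpa using hQ)

lemma slopeExcess_range_nonpos (hd : IsDimensionVector Λ d) (hb : ∀ t i, 0 < b t i) {t : ℝ}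
    (hM : Semistable d a b t M) (hMt : muZ a b t (d M) = t) (f : M →ₗ[Λ] Y) :
    slopeExcess a b t (d ↥(LinearMap.range f)) ≤ 0 := by
  have hsum := congrArg (slopeExcess a b t) (hd.d_ker_add_d_range f)
  rw [slopeExcess_add, slopeExcess_eq_zero_of_muZ_eq hb hMt] at hsum
  linarith [(semistable_iff hd hb hMt).mp hM (LinearMap.ker f)]

lemma Semistable.hom_eq_zero [IsNoetherian Λ Y] [IsArtinian Λ Y] (hd : IsDimensionVector Λ d)
    (hZ : IsStabilityFunction a b) {t : ℝ} (hM : Semistable d a b t M)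
    (hMt : muZ a b t (d M) = t) {c : ℝ} (htc : t ≤ c)
    (hY : ∀ Q : Submodule Λ Y, Q ≠ ⊥ → c < tzero a b (d ↥Q)) (f : M →ₗ[Λ] Y) : f = 0 := by
  by_contra hf
  have hR : LinearMap.range f ≠ ⊥ := LinearMap.range_eq_bot.not.mpr hf
  exact ((hZ.lt_tzero_iff (hd.d_ne_zero hR)).mp (hY _ hR) t htc).not_ge
    (slopeExcess_range_nonpos hd hZ.b_pos hM hMt f)

lemma eventually_sign_muZ_sub (hd : IsDimensionVector Λ d) (hZ : IsStabilityFunction a b)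
    (hgreen : ZGreen d a b) [Nontrivial M] {t : ℝ} (hM : Semistable d a b t M)
    (hMt : muZ a b t (d M) = t) :
    ∀ᶠ u in 𝓝 t, SignType.sign (muZ a b u (d M) - u) = SignType.sign (t - u) := by
  have hdM : d M ≠ 0 := by
    simpa [hd.eq_zero_iff] using exists_ne (0 : M)
  have hderiv : HasDerivAt (fun u => muZ a b u (d M) - u)
      (deriv (fun u => muZ a b u (d M)) t - 1) t :=
    ((hZ.differentiable_muZ hdM) t).hasDerivAt.sub (hasDerivAt_id t)
  refine eventually_nhdsWithin_sign_eq_of_deriv_neg ?_ (sub_eq_zero.mpr hMt)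
  rw [hderiv.deriv]
  linarith [hgreen M t (exists_ne 0) hM hMt]

/-- By induction on `I`, `I` is semistable at each of its crossings up to `t`; greenness then
forbids `μ_u(I) - u` from returning to `≥ 0` at `t` after crossing zero at `tzero(I) < t`. -/
theorem le_tzero_of_forall_slopeExcess_nonneg (hd : IsDimensionVector Λ d)
    (hZ : IsStabilityFunction a b) (hgreen : ZGreen d a b) {t : ℝ}
    (H : ∀ I : Submodule Λ M, 0 ≤ slopeExcess a b t (d ↥I)) :
    ∀ I : Submodule Λ M, I ≠ ⊥ → t ≤ tzero a b (d ↥I) := by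
  intro I
  induction I using WellFoundedLT.induction with
  | _ I ih =>
  intro hI
  have : Nontrivial ↥I := Submodule.nontrivial_iff_ne_bot.mpr hI
  have hdI := hd.d_ne_zero hI
  have hsemi : ∀ σ ≤ t, muZ a b σ (d ↥I) = σ → Semistable d a b σ ↥I := by
    refine fun σ hσt hσ => (semistable_iff hd hZ.b_pos hσ).mpr fun J => ?_
    rw [← hd.d_map_of_injective I.injective_subtype]
    rcases (Submodule.map_subtype_le I J).lt_or_eq with hJI | hJI
    · rcases eq_or_ne (J.map I.subtype) ⊥ with hJ | hJ
      · rw [hJ, hd.d_bot, slopeExcess_zero]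
      · exact hZ.slopeExcess_nonneg_of_le_tzero (hd.d_ne_zero hJ) (hσt.trans (ih _ hJI hJ))
    · rw [hJI]
      exact (slopeExcess_eq_zero_of_muZ_eq hZ.b_pos hσ).ge
  by_contra! htI
  have hneg := neg_of_downward_crossings (h := fun u => muZ a b u (d ↥I) - u)
    ((hZ.differentiable_muZ hdI).continuous.sub continuous_id) htI
    (sub_eq_zero.mpr (hZ.muZ_tzero hdI))
    fun σ hσ hσ0 => eventually_sign_muZ_sub hd hZ hgreen (hsemi σ hσ.2 (sub_eq_zero.mp hσ0))
      (sub_eq_zero.mp hσ0)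
  exact (sub_neg.mp hneg).not_ge ((le_muZ_iff hZ.b_pos hdI).mpr (H I))

theorem forall_lt_tzero_of_extension (hd : IsDimensionVector Λ d)
    (hZ : IsStabilityFunction a b) {c : ℝ} (K : Submodule Λ M)
    (hK : ∀ Q ≤ K, Q ≠ ⊥ → c < tzero a b (d ↥Q))
    (hMK : ∀ D : Submodule Λ (M ⧸ K), D ≠ ⊥ → c < tzero a b (d ↥D)) :
    ∀ Q : Submodule Λ M, Q ≠ ⊥ → c < tzero a b (d ↥Q) := by
  intro Q hQ
  rcases eq_or_ne (Q.map K.mkQ) ⊥ with hQK | hQK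
  · exact hK Q (by rwa [← LinearMap.le_ker_iff_map, Submodule.ker_mkQ] at hQK) hQ
  rw [hZ.lt_tzero_iff (hd.d_ne_zero hQ)]
  intro t ht
  have hinf : 0 ≤ slopeExcess a b t (d ↥(Q ⊓ K)) := by
    rcases eq_or_ne (Q ⊓ K) ⊥ with h0 | h0
    · rw [h0, hd.d_bot, slopeExcess_zero]
    · exact ((hZ.lt_tzero_iff (hd.d_ne_zero h0)).mp (hK _ inf_le_right h0) t ht).le
  rw [← hd.d_inf_add_d_map_mkQ K Q, slopeExcess_add]
  linarith [(hZ.lt_tzero_iff (hd.d_ne_zero hQK)).mp (hMK _ hQK) t ht]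

noncomputable def subquotientComapEquiv {X : Type} [AddCommGroup X] [Module Λ X]
    (q : X →ₗ[Λ] Y) (hq : Function.Surjective q) (U V : Submodule Λ Y) :
    (↥(V.comap q) ⧸ (U.comap q).comap (V.comap q).subtype) ≃ₗ[Λ] (↥V ⧸ U.comap V.subtype) :=
  let f : ↥(V.comap q) →ₗ[Λ] ↥V ⧸ U.comap V.subtype :=
    (U.comap V.subtype).mkQ ∘ₗ q.restrict fun _ hx => hx
  (Submodule.quotEquivOfEq _ _ (by ext; simp [f, Submodule.Quotient.mk_eq_zero])).trans
    (f.quotKerEquivOfSurjective fun y => by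
      obtain ⟨⟨y, hy⟩, rfl⟩ := Submodule.mkQ_surjective _ y
      obtain ⟨x, rfl⟩ := hq y
      exact ⟨⟨x, hy⟩, rfl⟩)

namespace HNin

variable {X : Type} [AddCommGroup X] [Module Λ X] {I J : Set ℝ}

lemma mono (hIJ : I ⊆ J) (h : HNin d a b I X) : HNin d a b J X :=
  let ⟨m, F, ts, hF, hF0, hFm, hts, htsI, hss⟩ := h
  ⟨m, F, ts, hF, hF0, hFm, hts, fun i => hIJ (htsI i), hss⟩

lemma of_subsingleton [Subsingleton X] : HNin d a b I X :=
  ⟨0, fun _ => ⊥, Fin.elim0, Fin.strictMono_iff_lt_succ.mpr Fin.elim0, rfl,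
    Subsingleton.elim _ _, fun i => i.elim0, fun i => i.elim0, fun i => i.elim0⟩

lemma nonempty [Nontrivial X] (h : HNin d a b I X) : I.Nonempty := by
  obtain ⟨m, F, ts, -, hF0, hFm, -, htsI, -⟩ := h
  cases m with
  | zero => exact absurd (hF0.symm.trans hFm) bot_ne_top
  | succ m => exact ⟨ts 0, htsI 0⟩

lemma of_equiv [IsNoetherian Λ X] [IsArtinian Λ X] (hd : IsDimensionVector Λ d)
    (e : X ≃ₗ[Λ] Y) (h : HNin d a b I X) : HNin d a b I Y := by
  obtain ⟨m, F, ts, hF, hF0, hFm, hts, htsI, hss⟩ := h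
  refine ⟨m, fun i => (F i).comap e.symm.toLinearMap, ts,
    (Submodule.comap_strictMono_of_surjective e.symm.surjective).comp hF, ?_, ?_, hts, htsI,
    fun i => semistable_muZ_of_equiv hd
      (subquotientComapEquiv e.symm.toLinearMap e.symm.surjective _ _).symm (hss i)⟩
  · simp [hF0]
  · simp [hFm]

lemma of_exact [IsNoetherian Λ X] [IsArtinian Λ X] {S : Type} [AddCommGroup S] [Module Λ S]
    [IsNoetherian Λ S] [IsArtinian Λ S] [Nontrivial S] (hd : IsDimensionVector Λ d)
    {j : S →ₗ[Λ] X} {q : X →ₗ[Λ] Y} (hj : Function.Injective j)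
    (hq : Function.Surjective q) (hjq : LinearMap.range j = LinearMap.ker q) {τ : ℝ}
    (hS : Semistable d a b τ S ∧ muZ a b τ (d S) = τ) (hτ : τ ∈ I)
    (h : HNin d a b (I ∩ Set.Ioi τ) Y) : HNin d a b I X := by
  have : IsNoetherian Λ Y := isNoetherian_of_linearEquiv (q.quotKerEquivOfSurjective hq)
  have : IsArtinian Λ Y := isArtinian_of_linearEquiv (q.quotKerEquivOfSurjective hq)
  let e : S ≃ₗ[Λ] LinearMap.ker q :=
    (LinearEquiv.ofInjective j hj).trans (LinearEquiv.ofEq _ _ hjq)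
  have hker : LinearMap.ker q ≠ ⊥ :=
    Submodule.nontrivial_iff_ne_bot.mp e.symm.toEquiv.nontrivial
  obtain ⟨m, F, ts, hF, hF0, hFm, hts, htsI, hss⟩ := h
  have hker0 : (F 0).comap q = LinearMap.ker q := by rw [hF0, Submodule.comap_bot]
  refine ⟨m + 1, Fin.cons ⊥ fun j => (F j).comap q, Fin.cons τ ts,
    Fin.strictMono_cons.mpr
      ⟨fun j => ?_, (Submodule.comap_strictMono_of_surjective hq).comp hF⟩,
    rfl, ?_, Fin.strictMono_cons.mpr ⟨fun j => (htsI j).2, hts⟩,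
    Fin.cases hτ fun j => (htsI j).1, Fin.cases ?_ fun j => ?_⟩
  · exact (bot_lt_iff_ne_bot.mpr hker).trans_le
      (hker0 ▸ Submodule.comap_mono (hF.monotone (Fin.zero_le j)))
  · rw [← Fin.succ_last, Fin.cons_succ, hFm, Submodule.comap_top]
  · refine semistable_muZ_of_equiv hd (e.trans <| (LinearEquiv.ofEq _ _ hker0.symm).trans
      (Submodule.quotEquivOfEqBot _ ?_).symm) hS
    exact Submodule.ker_subtype ((F 0).comap q)
  · exact semistable_muZ_of_equiv hd (subquotientComapEquiv q hq _ _).symm (hss j)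

lemma comap_mkQ (hd : IsDimensionVector Λ d) {P : Submodule Λ M} [Nontrivial ↥P] {τ : ℝ}
    (hP : Semistable d a b τ ↥P ∧ muZ a b τ (d ↥P) = τ) (hτ : τ ∈ I)
    {N : Submodule Λ (M ⧸ P)} (h : HNin d a b (I ∩ Set.Ioi τ) ↥N) :
    HNin d a b I ↥(N.comap P.mkQ) := by
  have hPN : P ≤ N.comap P.mkQ := (Submodule.ker_mkQ P).symm.trans_le (LinearMap.ker_le_comap _)
  refine of_exact hd (Submodule.inclusion_injective hPN) (q := P.mkQ.restrict fun _ hx => hx)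
    ?_ ?_ hP hτ h
  · rintro ⟨y, hy⟩
    obtain ⟨x, rfl⟩ := P.mkQ_surjective y
    exact ⟨⟨x, hy⟩, rfl⟩
  · ext ⟨x, hx⟩
    simp [Subtype.ext_iff, Submodule.Quotient.mk_eq_zero]

lemma lt_tzero [IsNoetherian Λ X] [IsArtinian Λ X] (hd : IsDimensionVector Λ d)
    (hZ : IsStabilityFunction a b) (hgreen : ZGreen d a b) {c : ℝ}
    (h : HNin d a b (Set.Ioi c) X) :
    ∀ Q : Submodule Λ X, Q ≠ ⊥ → c < tzero a b (d ↥Q) := by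
  obtain ⟨m, F, ts, -, hF0, hFm, -, htsI, hss⟩ := h
  suffices ∀ i, ∀ Q ≤ F i, Q ≠ ⊥ → c < tzero a b (d ↥Q) from
    fun Q => this (Fin.last m) Q (hFm ▸ le_top)
  intro i
  induction i using Fin.induction with
  | zero => exact fun Q hQ hQ0 => absurd (le_bot_iff.mp (hF0 ▸ hQ)) hQ0
  | succ i ih =>
    intro Q hQ hQ0
    have hsub := forall_lt_tzero_of_extension hd hZ (c := c)
      ((F i.castSucc).comap (F i.succ).subtype) (fun P hP hP0 => ?_) (fun D hD => ?_)
      (Q.comap (F i.succ).subtype) ?_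
    · rwa [hd.d_comap_subtype hQ] at hsub
    · rw [← hd.d_map_of_injective (F i.succ).injective_subtype]
      refine ih _ (Submodule.map_le_iff_le_comap.mpr hP) ?_
      rwa [Ne, ← LinearMap.le_ker_iff_map, Submodule.ker_subtype, le_bot_iff]
    · exact (htsI i).trans_le <| le_tzero_of_forall_slopeExcess_nonneg hd hZ hgreen
        ((semistable_iff hd hZ.b_pos (hss i).2).mp (hss i).1) D hD
    · rwa [Ne, ← hd.d_eq_zero_iff, hd.d_comap_subtype hQ, hd.d_eq_zero_iff]

lemma hom_eq_zero [IsNoetherian Λ X] [IsArtinian Λ X] [IsNoetherian Λ Y] [IsArtinian Λ Y]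
    (hd : IsDimensionVector Λ d) (hZ : IsStabilityFunction a b) {c : ℝ}
    (h : HNin d a b (Set.Iic c) X)
    (hY : ∀ Q : Submodule Λ Y, Q ≠ ⊥ → c < tzero a b (d ↥Q)) (f : X →ₗ[Λ] Y) : f = 0 := by
  obtain ⟨m, F, ts, -, hF0, hFm, -, htsI, hss⟩ := h
  suffices ∀ i, F i ≤ LinearMap.ker f by
    simpa [hFm] using this (Fin.last m)
  intro i
  induction i using Fin.induction with
  | zero => exact hF0 ▸ bot_le
  | succ i ih =>
    have hle : (F i.castSucc).comap (F i.succ).subtype ≤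
        LinearMap.ker (f ∘ₗ (F i.succ).subtype) := fun x hx => ih hx
    have hg := (hss i).1.hom_eq_zero hd hZ (hss i).2 (htsI i) hY (Submodule.liftQ _ _ hle)
    rw [LinearMap.le_ker_iff_comp_subtype_eq_zero, ← LinearMap.range_eq_bot,
      ← Submodule.range_liftQ _ _ hle, hg, LinearMap.range_zero]

end HNin

lemma slopeExcess_quotient_pos (hd : IsDimensionVector Λ d) {t : ℝ} {P : Submodule Λ M}
    (hP : slopeExcess a b t (d ↥P) = 0) (hM : ∀ Q : Submodule Λ M, 0 ≤ slopeExcess a b t (d ↥Q))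
    (hmax : ∀ Q, P < Q → slopeExcess a b t (d ↥Q) ≠ 0) :
    ∀ D : Submodule Λ (M ⧸ P), D ≠ ⊥ → 0 < slopeExcess a b t (d ↥D) := by
  intro D hD
  have hPD : P ≤ D.comap P.mkQ := (Submodule.ker_mkQ P).symm.trans_le (LinearMap.ker_le_comap _)
  have hsum := congrArg (slopeExcess a b t) (hd.d_inf_add_d_map_mkQ P (D.comap P.mkQ))
  rw [inf_eq_right.mpr hPD, Submodule.map_comap_eq_of_surjective P.mkQ_surjective,
    slopeExcess_add, hP, zero_add] at hsum
  refine (hsum ▸ hM _).lt_of_ne fun h0 => hmax _ (hPD.lt_of_ne fun h => hD ?_) (hsum ▸ h0.symm)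
  rw [← Submodule.map_comap_eq_of_surjective P.mkQ_surjective D, ← h]
  exact LinearMap.le_ker_iff_map.mp (Submodule.ker_mkQ P).ge

lemma exists_forall_lt_tzero (hd : IsDimensionVector Λ d) :
    ∃ c, ∀ Q : Submodule Λ M, c < tzero a b (d ↥Q) := by
  obtain ⟨c, hc⟩ := ((hd.finite_range_d_submodule (M := M)).image (tzero a b)).bddBelow
  exact ⟨c - 1, fun Q => (sub_one_lt c).trans_le (hc ⟨_, ⟨Q, rfl⟩, rfl⟩)⟩

/-- `P` is the largest submodule of slope `τ` at the first crossing time `τ` of all nonzero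
submodules of `M`. -/
theorem exists_semistable_submodule (hd : IsDimensionVector Λ d)
    (hZ : IsStabilityFunction a b) (hgreen : ZGreen d a b) [Nontrivial M] :
    ∃ P : Submodule Λ M, P ≠ ⊥ ∧ Semistable d a b (tzero a b (d ↥P)) ↥P ∧
      ∀ D : Submodule Λ (M ⧸ P), D ≠ ⊥ → tzero a b (d ↥P) < tzero a b (d ↥D) := by
  obtain ⟨_, ⟨Q₀, hQ₀, rfl⟩, hmin⟩ := Set.exists_min_image
    ((fun Q : Submodule Λ M => d ↥Q) '' {Q | Q ≠ ⊥})
    (tzero a b) (hd.finite_range_d_submodule.subset (Set.image_subset_range _ _))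
    ⟨_, ⊤, top_ne_bot, rfl⟩
  set τ := tzero a b (d ↥Q₀)
  have hτ : ∀ Q : Submodule Λ M, Q ≠ ⊥ → τ ≤ tzero a b (d ↥Q) :=
    fun Q hQ => hmin _ ⟨Q, hQ, rfl⟩
  have hexc : ∀ Q : Submodule Λ M, 0 ≤ slopeExcess a b τ (d ↥Q) := fun Q => by
    rcases eq_or_ne Q ⊥ with rfl | hQ
    · rw [hd.d_bot, slopeExcess_zero]
    · exact hZ.slopeExcess_nonneg_of_le_tzero (hd.d_ne_zero hQ) (hτ Q hQ)
  obtain ⟨P, ⟨hP, hPτ⟩, hPmax⟩ := set_has_maximal_iff_noetherian.mpr inferInstance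
    {Q : Submodule Λ M | Q ≠ ⊥ ∧ slopeExcess a b τ (d ↥Q) = 0}
    ⟨Q₀, hQ₀, slopeExcess_eq_zero_of_muZ_eq hZ.b_pos (hZ.muZ_tzero (hd.d_ne_zero hQ₀))⟩
  have hPμ : muZ a b τ (d ↥P) = τ := (muZ_eq_iff hZ.b_pos (hd.d_ne_zero hP)).mpr hPτ
  have htzP : tzero a b (d ↥P) = τ :=
    le_antisymm ((hZ.tzero_spec (hd.d_ne_zero hP)).1.2 hPμ) (hτ P hP)
  have hquot := slopeExcess_quotient_pos hd hPτ hexc fun Q hPQ h0 =>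
    hPmax Q ⟨(bot_le.trans_lt hPQ).ne', h0⟩ hPQ
  refine ⟨P, hP, htzP ▸ (semistable_iff hd hZ.b_pos hPμ).mpr fun J => ?_,
    fun D hD => htzP ▸ ?_⟩
  · rw [← hd.d_map_of_injective P.injective_subtype]
    exact hexc _
  · have hdD := hd.d_ne_zero hD
    refine (le_tzero_of_forall_slopeExcess_nonneg hd hZ hgreen (fun D => ?_) D hD).lt_of_ne
      fun h => (hquot D hD).ne' ((muZ_eq_iff hZ.b_pos hdD).mp (h ▸ hZ.muZ_tzero hdD))
    rcases eq_or_ne D ⊥ with rfl | hD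
    · rw [hd.d_bot, slopeExcess_zero]
    · exact (hquot D hD).le

theorem exists_hnIn_Ioc_hnIn_Ioi (hd : IsDimensionVector Λ d) (hZ : IsStabilityFunction a b)
    (hgreen : ZGreen d a b) (t₀ : ℝ) (k : ℕ) :
    ∀ (M : Type) [AddCommGroup M] [Module Λ M] [IsNoetherian Λ M] [IsArtinian Λ M],
      ∑ i, d M i = k → ∀ c : ℝ, (∀ Q : Submodule Λ M, Q ≠ ⊥ → c < tzero a b (d ↥Q)) →
      ∃ N : Submodule Λ M, HNin d a b (Set.Ioc c t₀) ↥N ∧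
        HNin d a b (Set.Ioi (max c t₀)) (M ⧸ N) := by
  induction k using Nat.strong_induction_on with
  | _ k ih =>
  intro M _ _ _ _ hk c hc
  rcases subsingleton_or_nontrivial M with hM | hM
  · exact ⟨⊥, .of_subsingleton, .of_subsingleton⟩
  obtain ⟨P, hP, hPss, hquot⟩ := exists_semistable_submodule hd hZ hgreen (M := M)
  set τ := tzero a b (d ↥P)
  have : Nontrivial ↥P := Submodule.nontrivial_iff_ne_bot.mpr hP
  have hPτ : Semistable d a b τ ↥P ∧ muZ a b τ (d ↥P) = τ :=
    ⟨hPss, hZ.muZ_tzero (hd.d_ne_zero hP)⟩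
  have hcτ : c < τ := hc P hP
  obtain ⟨N', hN', hquotN'⟩ := ih _ (hk ▸ hd.sum_d_quotient_lt hP) (M ⧸ P) rfl τ hquot
  rcases le_or_gt τ t₀ with hτ | hτ
  · refine ⟨N'.comap P.mkQ, HNin.comap_mkQ hd (I := Set.Ioc c t₀) hPτ ⟨hcτ, hτ⟩ (hN'.mono ?_),
      (hquotN'.of_equiv hd ?_).mono (Set.Ioi_subset_Ioi (max_le_max_right t₀ hcτ.le))⟩
    · exact fun t ht => ⟨⟨hcτ.trans ht.1, ht.2⟩, ht.1⟩
    · exact (Submodule.quotEquivOfEq _ _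
        (Submodule.map_comap_eq_of_surjective P.mkQ_surjective N').symm).trans
        (Submodule.quotientQuotientEquivQuotient P _
          ((Submodule.ker_mkQ P).symm.trans_le (LinearMap.ker_le_comap _)))
  · obtain rfl : N' = ⊥ := by
      by_contra hN'0
      have := Submodule.nontrivial_iff_ne_bot.mpr hN'0
      obtain ⟨t, ht₁, ht₂⟩ := hN'.nonempty
      exact (ht₁.trans_le ht₂).not_gt hτ
    refine ⟨⊥, .of_subsingleton, HNin.of_equiv hd (Submodule.quotEquivOfEqBot ⊥ rfl).symm ?_⟩
    refine HNin.of_exact hd P.injective_subtype P.mkQ_surjective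
      ((Submodule.range_subtype P).trans (Submodule.ker_mkQ P).symm) hPτ
      (max_lt hcτ hτ) ((hquotN'.of_equiv hd (Submodule.quotEquivOfEqBot ⊥ rfl)).mono ?_)
    exact fun t ht =>
      ⟨(max_le_max_right t₀ hcτ.le).trans_lt ht, (le_max_left τ t₀).trans_lt ht⟩

theorem exists_hnIn_Iic_hnIn_Ioi (hd : IsDimensionVector Λ d) (hZ : IsStabilityFunction a b)
    (hgreen : ZGreen d a b) (t₀ : ℝ) :
    ∃ N : Submodule Λ M, HNin d a b (Set.Iic t₀) ↥N ∧ HNin d a b (Set.Ioi t₀) (M ⧸ N) := by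
  obtain ⟨c, hc⟩ := exists_forall_lt_tzero (M := M) (a := a) (b := b) hd
  obtain ⟨N, hN, hMN⟩ := exists_hnIn_Ioc_hnIn_Ioi hd hZ hgreen t₀ _ M rfl c fun Q _ => hc Q
  exact ⟨N, hN.mono Set.Ioc_subset_Iic_self,
    hMN.mono (Set.Ioi_subset_Ioi (le_max_right c t₀))⟩

end Modules

/-- For a green nonlinear stability function `Z_•` and any `t₀ ∈ ℝ`, the
pair `(S_Z(−∞,t₀], S_Z(t₀,∞))` is a torsion pair in `mod-Λ`: Hom vanishes from the first
class to the second, a module lies in the first class iff it has no nonzero quotient in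
the second, and a module lies in the second class iff it has no nonzero submodule in the
first. -/
theorem stmt10 (Λ : Type) [Ring Λ] {n : ℕ}
    (d : (N : Type) → [AddCommGroup N] → [Module Λ N] → Fin n → ℕ)
    (hiso : ∀ (N N' : Type) [AddCommGroup N] [Module Λ N] [AddCommGroup N'] [Module Λ N']
      [IsNoetherian Λ N] [IsArtinian Λ N], (N ≃ₗ[Λ] N') → d N = d N')
    (hadd : ∀ (N : Type) [AddCommGroup N] [Module Λ N] [IsNoetherian Λ N] [IsArtinian Λ N]
      (A : Submodule Λ N), d ↥A + d (N ⧸ A) = d N)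
    (hzero : ∀ (N : Type) [AddCommGroup N] [Module Λ N] [IsNoetherian Λ N] [IsArtinian Λ N],
      (d N = 0 ↔ ∀ y : N, y = 0))
    (a b : ℝ → Fin n → ℝ)
    (hbpos : ∀ t i, 0 < b t i)
    (hC1a : ∀ i, ContDiff ℝ 1 (fun t => a t i))
    (hC1b : ∀ i, ContDiff ℝ 1 (fun t => b t i))
    (hconst : ∃ T : ℝ, 0 < T ∧ (∀ t, T ≤ t → a t = a T ∧ b t = b T) ∧
      (∀ t, t ≤ -T → a t = a (-T) ∧ b t = b (-T)))
    (hgreen : ZGreen d a b)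
    (t₀ : ℝ) :
    (∀ (A B : Type) [AddCommGroup A] [Module Λ A] [IsNoetherian Λ A] [IsArtinian Λ A]
        [AddCommGroup B] [Module Λ B] [IsNoetherian Λ B] [IsArtinian Λ B],
      HNin d a b (Set.Iic t₀) A → HNin d a b (Set.Ioi t₀) B →
        ∀ f : A →ₗ[Λ] B, f = 0) ∧
    (∀ (A : Type) [AddCommGroup A] [Module Λ A] [IsNoetherian Λ A] [IsArtinian Λ A],
      HNin d a b (Set.Iic t₀) A ↔
        ∀ N : Submodule Λ A, N ≠ ⊤ → ¬ HNin d a b (Set.Ioi t₀) (A ⧸ N)) ∧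
    (∀ (B : Type) [AddCommGroup B] [Module Λ B] [IsNoetherian Λ B] [IsArtinian Λ B],
      HNin d a b (Set.Ioi t₀) B ↔
        ∀ N : Submodule Λ B, N ≠ ⊥ → ¬ HNin d a b (Set.Iic t₀) ↥N) := by
  have hd : IsDimensionVector Λ d := ⟨hiso, hadd, hzero⟩
  have hZ : IsStabilityFunction a b := ⟨hbpos, hC1a, hC1b, hconst⟩
  have hom : ∀ (A B : Type) [AddCommGroup A] [Module Λ A] [IsNoetherian Λ A] [IsArtinian Λ A]
      [AddCommGroup B] [Module Λ B] [IsNoetherian Λ B] [IsArtinian Λ B],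
      HNin d a b (Set.Iic t₀) A → HNin d a b (Set.Ioi t₀) B → ∀ f : A →ₗ[Λ] B, f = 0 :=
    fun _ _ _ _ _ _ _ _ _ _ hA hB => hA.hom_eq_zero hd hZ (hB.lt_tzero hd hZ hgreen)
  refine ⟨hom, fun A _ _ _ _ => ⟨fun hA N hN hAN => ?_, fun h => ?_⟩,
    fun B _ _ _ _ => ⟨fun hB N hN hN' => ?_, fun h => ?_⟩⟩
  · rw [← Submodule.ker_mkQ N, Ne, LinearMap.ker_eq_top] at hN
    exact hN (hom _ _ hA hAN N.mkQ)
  · obtain ⟨N, hN, hAN⟩ := exists_hnIn_Iic_hnIn_Ioi hd hZ hgreen t₀ (M := A)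
    obtain rfl : N = ⊤ := by_contra fun hN' => h N hN' hAN
    exact hN.of_equiv hd Submodule.topEquiv
  · rw [← Submodule.range_subtype N, Ne, LinearMap.range_eq_bot] at hN
    exact hN (hom _ _ hN' hB _)
  · obtain ⟨N, hN, hBN⟩ := exists_hnIn_Iic_hnIn_Ioi hd hZ hgreen t₀ (M := B)
    obtain rfl : N = ⊥ := by_contra fun hN' => h N hN' hN
    exact hBN.of_equiv hd (Submodule.quotEquivOfEqBot ⊥ rfl)
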